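/- arXiv:2411.16880 — 3 statements merged into one kernel-verified Lean document; each statement's English description precedes it below -/
import Mathlib

section
/- Let p be an odd prime, let k be an integer and let (k_m)_{m≥1} be a sequence of integers with k_m ≡ k (mod (p−1)p^m) and k_m ≠ k for every m ≥ 1. Set a = (1+p)^k − 1 ∈ ℚ_p and a_m = (1+p)^{k_m} − 1 ∈ ℚ_p (powers of the unit 1+p with integer exponents). If f : ℚ_p → ℚ_p is analytic at the point a and f(a_m) = 0 for all m ≥ 1, then f vanishes identically on some neighbourhood of a (that is, f is eventually 0 with respect to the neighbourhood filter of a). -/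
/-!
By the lifting-the-exponent lemma, `‖(1 + p) ^ n - 1‖ = ‖p * n‖` for every integer `n` when `p`
is odd. Hence `‖a_m - a‖ = ‖p * (k_m - k)‖` is at most `p ^ (-m - 1)` but nonzero: the `a_m`
accumulate at `a` without reaching it, and the isolated zeros theorem forces `f` to vanish
near `a`.
-/

open Filter Topology

theorem norm_zpow_sub_zpow_of_norm_eq_one {𝕜 : Type*} [NormedDivisionRing 𝕜] {u : 𝕜}
    (hu : ‖u‖ = 1) (j k : ℤ) : ‖u ^ j - u ^ k‖ = ‖u ^ (j - k) - 1‖ := by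
  have hu0 : u ≠ 0 := norm_ne_zero_iff.mp (by rw [hu]; exact one_ne_zero)
  rw [show u ^ j - u ^ k = u ^ k * (u ^ (j - k) - 1) by
    rw [mul_sub, ← zpow_add₀ hu0, add_sub_cancel, mul_one], norm_mul, norm_zpow, hu, one_zpow,
    one_mul]

namespace Padic

variable {p : ℕ} [Fact p.Prime]

theorem norm_natCast_eq_of_padicValNat_eq {a b : ℕ} (ha : a ≠ 0) (hb : b ≠ 0)
    (h : padicValNat p a = padicValNat p b) : ‖(a : ℚ_[p])‖ = ‖(b : ℚ_[p])‖ := by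
  rw [norm_eq_zpow_neg_valuation (Nat.cast_ne_zero.mpr ha),
    norm_eq_zpow_neg_valuation (Nat.cast_ne_zero.mpr hb), valuation_natCast, valuation_natCast, h]

theorem norm_one_add_prime : ‖(1 + p : ℚ_[p])‖ = 1 := by
  exact_mod_cast norm_natCast_eq_one_iff.mpr (by simp : p.Coprime (1 + p))

theorem norm_one_add_prime_pow_sub_one (hodd : Odd p) (n : ℕ) :
    ‖(1 + p : ℚ_[p]) ^ n - 1‖ = ‖(p * n : ℚ_[p])‖ := by
  rcases eq_or_ne n 0 with rfl | hn
  · simp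
  have hp := (Fact.out : p.Prime)
  have hp1 := hp.one_lt
  have hlte : padicValNat p ((1 + p) ^ n - 1 ^ n) = padicValNat p (p * n) := by
    rw [padicValNat.pow_sub_pow hodd (by omega) (by simp) (by simp [Nat.dvd_one, hp.ne_one]) hn,
      padicValNat.mul hp.ne_zero hn, Nat.add_sub_cancel_left]
  rw [one_pow] at hlte
  have hnorm := norm_natCast_eq_of_padicValNat_eq (p := p) (Nat.sub_ne_zero_of_lt
    (Nat.one_lt_pow hn (by omega))) (mul_ne_zero hp.ne_zero hn) hlte
  push_cast [Nat.one_le_pow _ _ (by omega : 0 < 1 + p)] at hnorm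
  exact hnorm

theorem norm_one_add_prime_zpow_sub_one (hodd : Odd p) (n : ℤ) :
    ‖(1 + p : ℚ_[p]) ^ n - 1‖ = ‖(p * n : ℚ_[p])‖ := by
  obtain ⟨m, rfl | rfl⟩ := n.eq_nat_or_neg
  · exact_mod_cast norm_one_add_prime_pow_sub_one hodd m
  · have hneg := norm_zpow_sub_zpow_of_norm_eq_one (norm_one_add_prime (p := p)) 0 (-m)
    rw [zpow_zero, zero_sub, neg_neg, zpow_natCast] at hneg
    rw [norm_sub_rev, hneg, norm_one_add_prime_pow_sub_one hodd, Int.cast_neg, mul_neg, norm_neg,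
      Int.cast_natCast]

theorem norm_one_add_prime_zpow_sub_zpow (hodd : Odd p) (j k : ℤ) :
    ‖(1 + p : ℚ_[p]) ^ j - (1 + p) ^ k‖ = ‖(p * (j - k : ℤ) : ℚ_[p])‖ := by
  rw [norm_zpow_sub_zpow_of_norm_eq_one norm_one_add_prime, norm_one_add_prime_zpow_sub_one hodd]

theorem tendsto_intCast_zero_of_pow_dvd {x : ℕ → ℤ} (hx : ∀ᶠ m in atTop, (p : ℤ) ^ m ∣ x m) :
    Tendsto (fun m ↦ (x m : ℚ_[p])) atTop (𝓝 0) := by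
  have hp : (1 : ℝ) < p := by exact_mod_cast (Fact.out : p.Prime).one_lt
  have hpow : Tendsto (fun m : ℕ ↦ (p : ℝ)⁻¹ ^ m) atTop (𝓝 0) :=
    tendsto_pow_atTop_nhds_zero_of_lt_one (by positivity) (inv_lt_one_of_one_lt₀ hp)
  refine squeeze_zero_norm' ?_ hpow
  filter_upwards [hx] with m hm
  simpa using (norm_int_le_pow_iff_dvd (x m) m).mpr hm

theorem tendsto_one_add_prime_zpow_sub_one_nhdsNE (hodd : Odd p) {k : ℤ} {km : ℕ → ℤ}
    (hkm : ∀ᶠ m in atTop, (p : ℤ) ^ m ∣ km m - k) (hne : ∀ᶠ m in atTop, km m ≠ k) :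
    Tendsto (fun m ↦ (1 + p : ℚ_[p]) ^ km m - 1) atTop (𝓝[≠] ((1 + p : ℚ_[p]) ^ k - 1)) := by
  have hnorm (m : ℕ) : ‖(1 + p : ℚ_[p]) ^ km m - 1 - ((1 + p) ^ k - 1)‖ =
      ‖(p * (km m - k : ℤ) : ℚ_[p])‖ := by
    rw [sub_sub_sub_cancel_right, norm_one_add_prime_zpow_sub_zpow hodd]
  refine tendsto_nhdsWithin_iff.mpr ⟨?_, ?_⟩
  · rw [tendsto_iff_norm_sub_tendsto_zero]
    simp only [hnorm]
    simpa using ((tendsto_intCast_zero_of_pow_dvd hkm).const_mul (p : ℚ_[p])).norm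
  · filter_upwards [hne] with m hm
    rw [Set.mem_compl_singleton_iff, ← sub_ne_zero, ← norm_ne_zero_iff, hnorm]
    simpa [(Fact.out : p.Prime).ne_zero, sub_eq_zero] using hm

end Padic

theorem AnalyticAt.eventually_eq_zero_of_tendsto_nhdsNE {𝕜 E ι : Type*}
    [NontriviallyNormedField 𝕜] [NormedAddCommGroup E] [NormedSpace 𝕜 E] {f : 𝕜 → E} {w : 𝕜}
    {x : ι → 𝕜} {l : Filter ι} [l.NeBot] (hf : AnalyticAt 𝕜 f w) (hx : Tendsto x l (𝓝[≠] w))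
    (h0 : ∀ᶠ i in l, f (x i) = 0) : ∀ᶠ z in 𝓝 w, f z = 0 :=
  hf.frequently_zero_iff_eventually_zero.mp (hx.frequently h0.frequently)

/-- Let `p` be an odd prime, `k : ℤ` and `(k_m)_{m ≥ 1}` integers with
`k_m ≡ k [MOD (p-1)p^m]` and `k_m ≠ k`. Set `a = (1+p)^k - 1` and `a_m = (1+p)^{k_m} - 1`
in `ℚ_p`. If `f : ℚ_p → ℚ_p` is analytic at `a` and vanishes at every `a_m`, then `f`
vanishes identically on a neighbourhood of `a`. -/
theorem analytic_vanishing_at_accumulating_weights (p : ℕ) [Fact p.Prime] (hodd : Odd p)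
    (k : ℤ) (km : ℕ → ℤ)
    (hkm : ∀ m : ℕ, 1 ≤ m → ((p - 1 : ℤ) * p ^ m) ∣ km m - k)
    (hne : ∀ m : ℕ, 1 ≤ m → km m ≠ k)
    (f : ℚ_[p] → ℚ_[p])
    (hf : AnalyticAt ℚ_[p] f ((1 + p : ℚ_[p]) ^ k - 1))
    (hzero : ∀ m : ℕ, 1 ≤ m → f ((1 + p : ℚ_[p]) ^ km m - 1) = 0) :
    f =ᶠ[nhds ((1 + p : ℚ_[p]) ^ k - 1)] 0 := by
  have hpow : ∀ᶠ m in atTop, (p : ℤ) ^ m ∣ km m - k :=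
    eventually_atTop.mpr ⟨1, fun m hm ↦ (dvd_mul_left _ _).trans (hkm m hm)⟩
  have hweights := Padic.tendsto_one_add_prime_zpow_sub_one_nhdsNE hodd hpow
    (eventually_atTop.mpr ⟨1, hne⟩)
  exact hf.eventually_eq_zero_of_tendsto_nhdsNE hweights (eventually_atTop.mpr ⟨1, hzero⟩)
end

section
/- Let K be a normed field, let V and W be normed vector spaces over K, let T : V → V, T' : W → W and D : V → W be linear maps, and let c, α ∈ K. Suppose that ‖T' w‖ ≤ ‖w‖ for all w ∈ W, that D ∘ T = c · (T' ∘ D), and that ‖α‖ > ‖c‖. If v ∈ V satisfies (T − α·id)^N v = 0 for some natural number N, then D v = 0. -/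
/-- Abstract 'small slope implies classical': suppose `T'` is norm-decreasing,
`D ∘ T = c • (T' ∘ D)` and `‖α‖ > ‖c‖`. Then any generalized `α`-eigenvector `v` of `T`
(i.e. `(T - α • id)^N v = 0`) satisfies `D v = 0`. -/
theorem apply_eq_zero_of_small_slope {K : Type*} [NormedField K]
    {V : Type*} [NormedAddCommGroup V] [NormedSpace K V]
    {W : Type*} [NormedAddCommGroup W] [NormedSpace K W]
    (T : Module.End K V) (T' : Module.End K W) (D : V →ₗ[K] W) (c α : K)
    (hT' : ∀ w : W, ‖T' w‖ ≤ ‖w‖)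
    (hDT : D ∘ₗ (T : V →ₗ[K] V) = c • ((T' : W →ₗ[K] W) ∘ₗ D))
    (hα : ‖α‖ > ‖c‖)
    (v : V) (N : ℕ) (h : ((T - α • (1 : Module.End K V)) ^ N) v = 0) :
    D v = 0 := by
  induction N generalizing v with
  | zero =>
      simp only [pow_zero, Module.End.one_apply] at h
      simp [h]
  | succ n ih =>
      -- apply ih to (T - α • 1) v
      have hu : D ((T - α • (1 : Module.End K V)) v) = 0 := by
        apply ih
        rw [← Module.End.mul_apply, ← pow_succ]
        exact h
      have hstep : D (T v) - α • D v = 0 := by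
        simpa [LinearMap.sub_apply, LinearMap.smul_apply, Module.End.one_apply,
          map_sub, map_smul] using hu
      have hDTv : D (T v) = c • T' (D v) := by
        have := LinearMap.congr_fun hDT v
        simpa using this
      have key : α • D v = c • T' (D v) := by
        rw [← hDTv]; linear_combination (norm := abel) -hstep
      by_contra hne
      have h1 : ‖α‖ * ‖D v‖ ≤ ‖c‖ * ‖D v‖ := by
        calc ‖α‖ * ‖D v‖ = ‖α • D v‖ := (norm_smul _ _).symm
          _ = ‖c • T' (D v)‖ := by rw [key]
          _ = ‖c‖ * ‖T' (D v)‖ := norm_smul _ _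
          _ ≤ ‖c‖ * ‖D v‖ := by
              exact mul_le_mul_of_nonneg_left (hT' _) (norm_nonneg _)
      have hpos : 0 < ‖D v‖ := norm_pos_iff.mpr hne
      have : ‖α‖ ≤ ‖c‖ := le_of_mul_le_mul_right h1 hpos
      exact absurd this (not_le.mpr hα)
end

section
/- Let L be a complete normed field satisfying the ultrametric (nonarchimedean) triangle inequality, equipped with a ℚ_p-algebra structure whose structure map is an isometry. Let f be a nonzero formal power series with coefficients in the ring ℤ_p of p-adic integers. Then the set of x ∈ L with ‖x‖ < 1 at which f converges to zero, i.e. {x ∈ L : ‖x‖ < 1 and ∑_{n≥0} a_n x^n = 0, where a_n ∈ ℤ_p are the coefficients of f}, is finite. -/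
/-!
Krull's intersection theorem lets one write `f = p ^ μ • g` with `g` nonzero modulo `p`, and
Weierstrass preparation then gives `g = P * u` with `P` a monic polynomial and `u` a unit of
`ℤ_[p]⟦X⟧`. For `‖x‖ < 1` the coefficients are bounded, so evaluation at `x` is multiplicative
(Cauchy product); hence `u(x) u⁻¹(x) = 1`, and `f(x) = p ^ μ P(x) u(x)` vanishes only at the finitely
many roots of `P`.
-/

open PowerSeries IsLocalRing

namespace PowerSeries

section Divisibility

variable {A : Type*} [CommRing A] [IsLocalRing A] {ϖ : A}

theorem exists_eq_smul_of_map_residue_eq_zero (hϖ : maximalIdeal A = Ideal.span {ϖ})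
    {f : A⟦X⟧} (hf : f.map (residue A) = 0) : ∃ g : A⟦X⟧, f = ϖ • g := by
  have hdvd (n : ℕ) : ϖ ∣ coeff n f := by
    rw [← Ideal.mem_span_singleton, ← hϖ, ← residue_eq_zero_iff, ← coeff_map, hf, map_zero]
  choose g hg using hdvd
  exact ⟨mk g, ext fun n => by rw [coeff_smul, coeff_mk, smul_eq_mul, ← hg]⟩

theorem exists_eq_pow_smul_of_not_dvd (hϖ : maximalIdeal A = Ideal.span {ϖ}) {n k : ℕ}
    {f : A⟦X⟧} (hf : ¬ ϖ ^ k ∣ coeff n f) :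
    ∃ (μ : ℕ) (g : A⟦X⟧), f = ϖ ^ μ • g ∧ g.map (residue A) ≠ 0 := by
  induction k generalizing f with
  | zero => exact (hf (by simp)).elim
  | succ k ih =>
    by_cases hres : f.map (residue A) = 0
    · obtain ⟨f', rfl⟩ := exists_eq_smul_of_map_residue_eq_zero hϖ hres
      have hf' : ¬ ϖ ^ k ∣ coeff n f' := fun h => hf <| by
        rw [coeff_smul, smul_eq_mul, pow_succ']
        exact mul_dvd_mul_left ϖ h
      obtain ⟨μ, g, rfl, hg⟩ := ih hf'
      exact ⟨μ + 1, g, by rw [smul_smul, pow_succ'], hg⟩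
    · exact ⟨0, f, by rw [pow_zero, one_smul], hres⟩

theorem exists_eq_pow_smul_map_residue_ne_zero [IsNoetherianRing A]
    (hϖ : maximalIdeal A = Ideal.span {ϖ}) {f : A⟦X⟧} (hf : f ≠ 0) :
    ∃ (μ : ℕ) (g : A⟦X⟧), f = ϖ ^ μ • g ∧ g.map (residue A) ≠ 0 := by
  obtain ⟨n, hn⟩ : ∃ n, coeff n f ≠ 0 := by
    by_contra! h
    exact hf (ext fun n => by rw [h, map_zero])
  have hKrull :=
    Ideal.iInf_pow_eq_bot_of_isLocalRing (maximalIdeal A) (maximalIdeal.isMaximal A).ne_top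
  obtain ⟨k, hk⟩ : ∃ k, coeff n f ∉ maximalIdeal A ^ k := by
    by_contra! h
    exact hn (by simpa [hKrull] using Ideal.mem_iInf.mpr h)
  rw [hϖ, Ideal.span_singleton_pow, Ideal.mem_span_singleton] at hk
  exact exists_eq_pow_smul_of_not_dvd hϖ hk

end Divisibility

section Evaluation

variable {L : Type*} [NormedCommRing L] {x : L}

theorem summable_norm_coeff_mul_pow [NormOneClass L] {f : L⟦X⟧}
    (hf : BddAbove (Set.range fun n => ‖coeff n f‖)) (hx : ‖x‖ < 1) :
    Summable fun n => ‖coeff n f * x ^ n‖ := by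
  obtain ⟨C, hC⟩ := hf
  refine .of_nonneg_of_le (fun _ => norm_nonneg _) (fun n => ?_)
    ((summable_geometric_of_lt_one (norm_nonneg x) hx).mul_left C)
  calc ‖coeff n f * x ^ n‖ ≤ ‖coeff n f‖ * ‖x‖ ^ n :=
        (norm_mul_le _ _).trans (mul_le_mul_of_nonneg_left (norm_pow_le _ _) (norm_nonneg _))
    _ ≤ C * ‖x‖ ^ n := mul_le_mul_of_nonneg_right (hC ⟨n, rfl⟩) (by positivity)

theorem tsum_coeff_mul_mul_pow [NormOneClass L] [CompleteSpace L] {f g : L⟦X⟧}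
    (hf : BddAbove (Set.range fun n => ‖coeff n f‖))
    (hg : BddAbove (Set.range fun n => ‖coeff n g‖)) (hx : ‖x‖ < 1) :
    ∑' n, coeff n (f * g) * x ^ n = (∑' n, coeff n f * x ^ n) * ∑' n, coeff n g * x ^ n := by
  have hmul := tsum_mul_tsum_eq_tsum_sum_antidiagonal_of_summable_norm
    (f := fun n => coeff n f * x ^ n) (g := fun n => coeff n g * x ^ n)
    (summable_norm_coeff_mul_pow hf hx) (summable_norm_coeff_mul_pow hg hx)
  rw [hmul]
  refine tsum_congr fun n => ?_
  rw [coeff_mul, Finset.sum_mul]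
  refine Finset.sum_congr rfl fun kl hkl => ?_
  rw [← Finset.HasAntidiagonal.mem_antidiagonal.mp hkl, pow_add]
  ring

theorem tsum_coeff_coe_mul_pow (P : Polynomial L) :
    ∑' n, coeff n (P : L⟦X⟧) * x ^ n = P.eval x := by
  rw [Polynomial.eval_eq_sum_range, tsum_eq_sum (s := Finset.range (P.natDegree + 1))]
  · simp only [Polynomial.coeff_coe]
  · intro n hn
    rw [Polynomial.coeff_coe, Polynomial.coeff_eq_zero_of_natDegree_lt (by simpa using hn), zero_mul]

theorem tsum_coeff_mul_pow_ne_zero_of_mul_eq_one [NormOneClass L] [CompleteSpace L]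
    {u v : L⟦X⟧} (huv : u * v = 1)
    (hu : BddAbove (Set.range fun n => ‖coeff n u‖))
    (hv : BddAbove (Set.range fun n => ‖coeff n v‖)) (hx : ‖x‖ < 1) :
    ∑' n, coeff n u * x ^ n ≠ 0 := by
  have hone : (∑' n, coeff n u * x ^ n) * ∑' n, coeff n v * x ^ n = 1 := by
    rw [← tsum_coeff_mul_mul_pow hu hv hx, huv, ← Polynomial.coe_one, tsum_coeff_coe_mul_pow,
      Polynomial.eval_one]
  have : Nontrivial L := NormOneClass.nontrivial
  exact left_ne_zero_of_mul_eq_one hone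

theorem bddAbove_range_norm_coeff_map {A : Type*} [CommRing A] {φ : A →+* L}
    (hφ : ∀ a, ‖φ a‖ ≤ 1) (g : A⟦X⟧) : BddAbove (Set.range fun n => ‖coeff n (g.map φ)‖) :=
  ⟨1, by
    rintro _ ⟨n, rfl⟩
    simpa only [coeff_map] using hφ (coeff n g)⟩

end Evaluation

theorem finite_setOf_tsum_coeff_map_mul_pow_eq_zero {A L : Type*} [CommRing A] [IsLocalRing A]
    [IsNoetherianRing A] [IsAdicComplete (maximalIdeal A) A] [NormedField L] [CompleteSpace L]
    {ϖ : A} (hϖ : maximalIdeal A = Ideal.span {ϖ}) {φ : A →+* L} (hφ : Function.Injective φ)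
    (hφ_le : ∀ a, ‖φ a‖ ≤ 1) {f : A⟦X⟧} (hf : f ≠ 0) :
    {x : L | ‖x‖ < 1 ∧ ∑' n, φ (coeff n f) * x ^ n = 0}.Finite := by
  obtain ⟨μ, g, rfl, hg⟩ := exists_eq_pow_smul_map_residue_ne_zero hϖ hf
  obtain ⟨P, u, hP, hu, rfl⟩ := g.exists_isWeierstrassFactorization hg
  obtain ⟨v, huv⟩ := hu.exists_right_inv
  refine (Polynomial.finite_setOfPred_isRoot (hP.monic.map φ).ne_zero).subset ?_
  rintro x ⟨hx, hzero⟩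
  have hbdd := bddAbove_range_norm_coeff_map hφ_le
  have hfactor : ∑' n, φ (coeff n (ϖ ^ μ • (↑P * u))) * x ^ n
      = φ (ϖ ^ μ) * ((P.map φ).eval x * ∑' n, coeff n (u.map φ) * x ^ n) := by
    rw [← tsum_coeff_coe_mul_pow, Polynomial.polynomial_map_coe,
      ← tsum_coeff_mul_mul_pow (hbdd P) (hbdd u) hx, ← map_mul, ← tsum_mul_left]
    exact tsum_congr fun n => by rw [coeff_map, coeff_smul, smul_eq_mul, map_mul, mul_assoc]
  have hunit : ∑' n, coeff n (u.map φ) * x ^ n ≠ 0 :=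
    tsum_coeff_mul_pow_ne_zero_of_mul_eq_one (v := v.map φ) (by rw [← map_mul, huv, map_one])
      (hbdd u) (hbdd v) hx
  rw [hfactor, mul_eq_zero, mul_eq_zero] at hzero
  have hϖμ : φ (ϖ ^ μ) ≠ 0 := fun h => hf <| by rw [(map_eq_zero_iff φ hφ).mp h, zero_smul]
  exact (hzero.resolve_left hϖμ).resolve_right hunit

end PowerSeries

theorem finite_zeroes_of_power_series_general (p : ℕ) [Fact p.Prime]
    (L : Type*) [NormedField L] [CompleteSpace L]
    [Algebra ℚ_[p] L] (hiso : ∀ x : ℚ_[p], ‖algebraMap ℚ_[p] L x‖ = ‖x‖)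
    (f : PowerSeries ℤ_[p]) (hf : f ≠ 0) :
    {x : L | ‖x‖ < 1 ∧
      ∑' n : ℕ, algebraMap ℚ_[p] L ((PowerSeries.coeff n f : ℤ_[p]) : ℚ_[p]) * x ^ n = 0}.Finite :=
  finite_setOf_tsum_coeff_map_mul_pow_eq_zero PadicInt.maximalIdeal_eq_span_p
    (φ := (algebraMap ℚ_[p] L).comp PadicInt.Coe.ringHom)
    ((algebraMap ℚ_[p] L).injective.comp Subtype.val_injective)
    (fun a => (hiso a).trans_le (PadicInt.norm_le_one a)) hf

/-- Let `L` be a complete nonarchimedean normed field equipped with an isometric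
`ℚ_p`-algebra structure, and let `f` be a nonzero formal power series with `ℤ_p`
coefficients. Then the set of `x ∈ L` with `‖x‖ < 1` at which `f` converges to zero
is finite. -/
theorem finite_zeroes_of_power_series (p : ℕ) [Fact p.Prime]
    (L : Type*) [NormedField L] [CompleteSpace L] [IsUltrametricDist L]
    [Algebra ℚ_[p] L] (hiso : ∀ x : ℚ_[p], ‖algebraMap ℚ_[p] L x‖ = ‖x‖)
    (f : PowerSeries ℤ_[p]) (hf : f ≠ 0) :
    {x : L | ‖x‖ < 1 ∧
      ∑' n : ℕ, algebraMap ℚ_[p] L ((PowerSeries.coeff n f : ℤ_[p]) : ℚ_[p]) * x ^ n = 0}.Finite :=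
  finite_zeroes_of_power_series_general p L hiso f hf
end
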